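/- arXiv:math/9910065 — 2 statements merged into one kernel-verified Lean document; each statement's English description precedes it below -/
import Mathlib

section
/- Let G be a group and C ⊆ G a normal cone whose induced relation ≥ is a partial order. If f and g are both dominants, then γ_k(f,g) ≥ 1 for every integer k ≥ 1, and consequently γ(f,g) > 0 and γ(g,f) > 0. -/
/-! Since `f` and `g` are dominants, `g ^ q ≥ f` for some `q : ℕ`, hence `g ^ (q * p) ≥ f ^ p ≥ g ^ k`
whenever `f ^ p ≥ g ^ k` with `p ≥ 0`. Antisymmetry forces a power `g ^ n` of a nontrivial element
of the cone to have `n ≥ 0`, so `k ≤ q * p`, and in particular `k ≤ q * γ_k(f,g)`. This gives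
`γ_k(f,g) ≥ 1` for `k ≥ 1` and `γ(f,g) ≥ 1 / q > 0`; symmetrically `γ(g,f) > 0`. -/

open Filter

/-- A subset `C` of a group is a *normal cone* if it contains `1`, is closed under
multiplication, and is invariant under conjugation. -/
def IsNormalCone {G : Type*} [Group G] (C : Set G) : Prop :=
  (1 : G) ∈ C ∧ (∀ f g : G, f ∈ C → g ∈ C → f * g ∈ C) ∧
    (∀ f h : G, f ∈ C → h * f * h⁻¹ ∈ C)

/-- The relation `f ≥ g` induced by the cone `C`: `f * g⁻¹ ∈ C`. -/
def ConeGe {G : Type*} [Group G] (C : Set G) (f g : G) : Prop := f * g⁻¹ ∈ C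

/-- `f` is a *dominant*: it lies in the cone, is not `1`, and some power of `f`
dominates any given element. -/
def IsDominant {G : Type*} [Group G] (C : Set G) (f : G) : Prop :=
  f ∈ C ∧ f ≠ 1 ∧ ∀ g : G, ∃ p : ℕ, ConeGe C (f ^ p) g

/-- `γ_k(f,g) = inf { p ∈ ℤ | f^p ≥ g^k }`. -/
noncomputable def gammaK {G : Type*} [Group G] (C : Set G) (f g : G) (k : ℕ) : ℤ :=
  sInf {p : ℤ | ConeGe C (f ^ p) (g ^ k)}

open Topology

section Cone

variable {G : Type*} [Group G] {C : Set G}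

@[simp]
lemma coneGe_one_iff {x : G} : ConeGe C x 1 ↔ x ∈ C := by
  simp [ConeGe]

lemma coneGe_zpow_zpow_iff {g : G} {a b : ℤ} : ConeGe C (g ^ a) (g ^ b) ↔ g ^ (a - b) ∈ C := by
  rw [ConeGe, zpow_sub]

lemma eq_one_of_mem_of_inv_mem (hanti : ∀ f g : G, ConeGe C f g → ConeGe C g f → f = g) {x : G}
    (hx : x ∈ C) (hx' : x⁻¹ ∈ C) : x = 1 :=
  hanti x 1 (coneGe_one_iff.2 hx) (by simpa [ConeGe] using hx')

namespace IsNormalCone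

variable (hC : IsNormalCone C)
include hC

lemma mul_mem {x y : G} (hx : x ∈ C) (hy : y ∈ C) : x * y ∈ C :=
  hC.2.1 x y hx hy

lemma coneGe_trans {x y z : G} (hxy : ConeGe C x y) (hyz : ConeGe C y z) : ConeGe C x z := by
  have h := hC.mul_mem hxy hyz
  rwa [ConeGe, show x * z⁻¹ = x * y⁻¹ * (y * z⁻¹) by group]

lemma coneGe_mul {x y x' y' : G} (h : ConeGe C x y) (h' : ConeGe C x' y') :
    ConeGe C (x * x') (y * y') := by
  have h'' := hC.mul_mem h (hC.2.2 _ y h')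
  rwa [ConeGe, show x * x' * (y * y')⁻¹ = x * y⁻¹ * (y * (x' * y'⁻¹) * y⁻¹) by group]

lemma coneGe_pow {x y : G} (h : ConeGe C x y) (n : ℕ) : ConeGe C (x ^ n) (y ^ n) := by
  induction n with
  | zero => simpa using hC.1
  | succ n ih => simpa only [pow_succ] using hC.coneGe_mul ih h

lemma pow_mem {x : G} (hx : x ∈ C) (n : ℕ) : x ^ n ∈ C := by
  simpa using hC.coneGe_pow (coneGe_one_iff.2 hx) n

lemma zpow_mem {x : G} (hx : x ∈ C) {n : ℤ} (hn : 0 ≤ n) : x ^ n ∈ C := by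
  lift n to ℕ using hn
  simpa using hC.pow_mem hx n

variable (hanti : ∀ f g : G, ConeGe C f g → ConeGe C g f → f = g)
include hanti

lemma nonneg_of_zpow_mem {x : G} (hx : x ∈ C) (hx1 : x ≠ 1) {n : ℤ} (hn : x ^ n ∈ C) : 0 ≤ n := by
  by_contra! hneg
  -- `x⁻¹ = x ^ n * x ^ (-n - 1)` with `-n - 1 ≥ 0`
  have hinv : x⁻¹ ∈ C := by
    have h := hC.mul_mem hn (hC.zpow_mem hx (n := -n - 1) (by omega))
    rwa [← zpow_add, show n + (-n - 1) = -1 by ring, zpow_neg_one] at h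
  exact hx1 (eq_one_of_mem_of_inv_mem hanti hx hinv)

variable {f g : G}

lemma nonneg_of_coneGe_zpow (hf : f ∈ C) (hf1 : f ≠ 1) (hg : g ∈ C) {p : ℤ} {k : ℕ}
    (hp : ConeGe C (f ^ p) (g ^ k)) : 0 ≤ p :=
  hC.nonneg_of_zpow_mem hanti hf hf1
    (coneGe_one_iff.1 (hC.coneGe_trans hp (coneGe_one_iff.2 (hC.pow_mem hg k))))

lemma le_mul_of_coneGe_zpow (hf : f ∈ C) (hf1 : f ≠ 1) (hg : g ∈ C) (hg1 : g ≠ 1) {q : ℕ}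
    (hq : ConeGe C (g ^ q) f) {p : ℤ} {k : ℕ} (hp : ConeGe C (f ^ p) (g ^ k)) :
    (k : ℤ) ≤ q * p := by
  have hp0 := hC.nonneg_of_coneGe_zpow hanti hf hf1 hg hp
  lift p to ℕ using hp0
  have hgg : ConeGe C (g ^ ((q * p : ℕ) : ℤ)) (g ^ (k : ℤ)) := by
    rw [zpow_natCast, zpow_natCast, pow_mul]
    exact hC.coneGe_trans (hC.coneGe_pow hq p) (by simpa using hp)
  have := hC.nonneg_of_zpow_mem hanti hg hg1 (coneGe_zpow_zpow_iff.1 hgg)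
  push_cast at this
  omega

lemma gammaK_mem (hf : IsDominant C f) (hg : g ∈ C) (k : ℕ) :
    ConeGe C (f ^ gammaK C f g k) (g ^ k) := by
  obtain ⟨p, hp⟩ := hf.2.2 (g ^ k)
  refine Int.csInf_mem (s := {p : ℤ | ConeGe C (f ^ p) (g ^ k)}) ⟨p, by simpa using hp⟩ ⟨0, fun p hp => ?_⟩
  exact hC.nonneg_of_coneGe_zpow hanti hf.1 hf.2.1 hg hp

lemma le_mul_gammaK (hf : IsDominant C f) (hg : IsDominant C g) {q : ℕ}
    (hq : ConeGe C (g ^ q) f) (k : ℕ) : (k : ℤ) ≤ q * gammaK C f g k :=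
  hC.le_mul_of_coneGe_zpow hanti hf.1 hf.2.1 hg.1 hg.2.1 hq (hC.gammaK_mem hanti hf hg.1 k)

lemma one_le_gammaK (hf : IsDominant C f) (hg : IsDominant C g) {k : ℕ} (hk : 1 ≤ k) :
    1 ≤ gammaK C f g k := by
  obtain ⟨q, hq⟩ := hg.2.2 f
  have h := hC.le_mul_gammaK hanti hf hg hq k
  have : 0 < gammaK C f g k := pos_of_mul_pos_right (by omega) (Int.natCast_nonneg q)
  omega

end IsNormalCone

end Cone

lemma pos_of_tendsto_div_of_le_mul {u : ℕ → ℤ} {A : ℝ} {q : ℕ}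
    (hu : Tendsto (fun k : ℕ => (u k : ℝ) / k) atTop (𝓝 A)) (hle : ∀ k : ℕ, (k : ℤ) ≤ q * u k) :
    0 < A := by
  have hqA : 1 ≤ (q : ℝ) * A := by
    refine ge_of_tendsto (hu.const_mul (q : ℝ)) ?_
    filter_upwards [eventually_ge_atTop 1] with k hk
    have hk' : (0 : ℝ) < k := by exact_mod_cast hk
    rw [← mul_div_assoc, le_div_iff₀ hk', one_mul]
    exact_mod_cast hle k
  exact pos_of_mul_pos_right (by linarith) (Nat.cast_nonneg q)

/-- If `f` and `g` are both dominants then `γ_k(f,g) ≥ 1` for every `k ≥ 1`, and both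
relative growth numbers are strictly positive. -/
theorem statement5 {G : Type*} [Group G] (C : Set G) (hC : IsNormalCone C)
    (hanti : ∀ f g : G, ConeGe C f g → ConeGe C g f → f = g)
    (f g : G) (hf : IsDominant C f) (hg : IsDominant C g)
    (A B : ℝ)
    (hA : Tendsto (fun k : ℕ => (gammaK C f g k : ℝ) / (k : ℝ)) atTop (nhds A))
    (hB : Tendsto (fun k : ℕ => (gammaK C g f k : ℝ) / (k : ℝ)) atTop (nhds B)) :
    (∀ k : ℕ, 1 ≤ k → 1 ≤ gammaK C f g k) ∧ 0 < A ∧ 0 < B := by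
  obtain ⟨q, hq⟩ := hg.2.2 f
  obtain ⟨r, hr⟩ := hf.2.2 g
  exact ⟨fun k hk => hC.one_le_gammaK hanti hf hg hk,
    pos_of_tendsto_div_of_le_mul hA (hC.le_mul_gammaK hanti hf hg hq),
    pos_of_tendsto_div_of_le_mul hB (hC.le_mul_gammaK hanti hg hf hr)⟩
end

section
/- Let G be a group and C ⊆ G a normal cone whose induced relation ≥ is a partial order. For dominants f, g define κ(f,g) = max(log γ(f,g), log γ(g,f)). Then κ is a pseudo-distance on the set of dominants: κ(f,g) ≥ 0, κ(f,f) = 0, κ(f,g) = κ(g,f), and κ(f,h) ≤ κ(f,g) + κ(g,h) for all dominants f, g, h. -/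
open Filter

/-!
Write `γ_k(f,g)` for `gammaK C f g k`. If `f^a ≥ g^m` and `g^m ≥ h^k` with `m = γ_k(g,h)`, then
`f^a ≥ h^k`; hence `γ_k(f,h) ≤ γ_{γ_k(g,h)}(f,g)`, and dividing by `k` gives the
submultiplicativity `γ(f,h) ≤ γ(f,g) γ(g,h)`. Antisymmetry of the order gives `γ_k(f,f) = k`,
so `γ(f,f) = 1`, and with `h = f` also `k ≤ γ_k(f,g) γ_1(g,f)`, which makes every `γ(f,g)`
positive. Taking logarithms turns submultiplicativity into the triangle inequality for `κ`,
and `γ(f,g) γ(g,f) ≥ γ(f,f) = 1` into `κ(f,g) ≥ 0`.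
-/

open Topology

section RelativeGrowth

variable {G : Type*} [Group G] {C : Set G}

def IsConeAntisymm (C : Set G) : Prop :=
  ∀ f g : G, ConeGe C f g → ConeGe C g f → f = g

/-- `L` is the relative growth number `γ(f,g)`. -/
def HasRelGrowth (C : Set G) (f g : G) (L : ℝ) : Prop :=
  Tendsto (fun k : ℕ => (gammaK C f g k : ℝ) / k) atTop (𝓝 L)

theorem IsNormalCone.pow_mem_s9 (hC : IsNormalCone C) {f : G} (hf : f ∈ C) (n : ℕ) :
    f ^ n ∈ C := by
  induction n with
  | zero => simpa using hC.1
  | succ n ih => simpa [pow_succ] using hC.2.1 _ _ ih hf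

theorem IsNormalCone.zpow_mem_s9 (hC : IsNormalCone C) {f : G} (hf : f ∈ C) {p : ℤ}
    (hp : 0 ≤ p) : f ^ p ∈ C := by
  lift p to ℕ using hp
  simpa using hC.pow_mem_s9 hf p

theorem IsNormalCone.coneGe_trans_s9 (hC : IsNormalCone C) {a b c : G} (hab : ConeGe C a b)
    (hbc : ConeGe C b c) : ConeGe C a c := by
  simpa [ConeGe, mul_assoc] using hC.2.1 _ _ hab hbc

theorem IsNormalCone.coneGe_mul_s9 (hC : IsNormalCone C) {a b c d : G} (hab : ConeGe C a b)
    (hcd : ConeGe C c d) : ConeGe C (a * c) (b * d) := by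
  have h := hC.2.1 _ _ (hC.2.2 _ a hcd) hab
  rwa [show a * (c * d⁻¹) * a⁻¹ * (a * b⁻¹) = a * c * (b * d)⁻¹ by group] at h

theorem IsNormalCone.coneGe_pow_s9 (hC : IsNormalCone C) {a b : G} (hab : ConeGe C a b) (n : ℕ) :
    ConeGe C (a ^ n) (b ^ n) := by
  induction n with
  | zero => simpa [ConeGe] using hC.1
  | succ n ih => simpa [pow_succ] using hC.coneGe_mul_s9 ih hab

theorem IsConeAntisymm.eq_one_of_inv_mem (hanti : IsConeAntisymm C) {f : G} (hf : f ∈ C)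
    (hfi : f⁻¹ ∈ C) : f = 1 :=
  hanti f 1 (by simpa [ConeGe] using hf) (by simpa [ConeGe] using hfi)

theorem nonneg_of_zpow_mem (hC : IsNormalCone C) (hanti : IsConeAntisymm C) {f : G}
    (hf : f ∈ C) (hf1 : f ≠ 1) {p : ℤ} (hp : f ^ p ∈ C) : 0 ≤ p := by
  by_contra! hneg
  have h := hC.2.1 _ _ (hC.zpow_mem_s9 hf (by omega : 0 ≤ -p - 1)) hp
  rw [← zpow_add, show -p - 1 + p = -1 by ring, zpow_neg_one] at h
  exact hf1 (hanti.eq_one_of_inv_mem hf h)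

theorem one_le_of_coneGe_zpow_pow (hC : IsNormalCone C) (hanti : IsConeAntisymm C) {f g : G}
    (hf : f ∈ C) (hg : g ∈ C) (hg1 : g ≠ 1) {k : ℕ} (hk : 1 ≤ k) {p : ℤ}
    (hp : ConeGe C (f ^ p) (g ^ k)) : 1 ≤ p := by
  by_contra! hp1
  have h := hC.2.1 _ _ (hC.zpow_mem_s9 hf (by omega : 0 ≤ -p)) hp
  rw [show f ^ (-p) * (f ^ p * (g ^ k)⁻¹) = g ^ (-(k : ℤ)) by group] at h
  have := nonneg_of_zpow_mem hC hanti hg hg1 h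
  omega

theorem bddBelow_coneGe_zpow_pow (hC : IsNormalCone C) (hanti : IsConeAntisymm C) {f g : G}
    (hf : f ∈ C) (hg : g ∈ C) (hg1 : g ≠ 1) {k : ℕ} (hk : 1 ≤ k) :
    BddBelow {p : ℤ | ConeGe C (f ^ p) (g ^ k)} :=
  ⟨1, fun _ hp => one_le_of_coneGe_zpow_pow hC hanti hf hg hg1 hk hp⟩

theorem gammaK_le (hC : IsNormalCone C) (hanti : IsConeAntisymm C) {f g : G}
    (hf : f ∈ C) (hg : IsDominant C g) {k : ℕ} (hk : 1 ≤ k) {p : ℤ}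
    (hp : ConeGe C (f ^ p) (g ^ k)) : gammaK C f g k ≤ p :=
  csInf_le (bddBelow_coneGe_zpow_pow hC hanti hf hg.1 hg.2.1 hk) hp

theorem coneGe_zpow_gammaK (hC : IsNormalCone C) (hanti : IsConeAntisymm C) {f g : G}
    (hf : IsDominant C f) (hg : IsDominant C g) {k : ℕ} (hk : 1 ≤ k) :
    ConeGe C (f ^ gammaK C f g k) (g ^ k) := by
  obtain ⟨p, hp⟩ := hf.2.2 (g ^ k)
  exact Int.csInf_mem ⟨p, by simpa using hp⟩ (bddBelow_coneGe_zpow_pow hC hanti hf.1 hg.1 hg.2.1 hk)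

theorem one_le_gammaK (hC : IsNormalCone C) (hanti : IsConeAntisymm C) {f g : G}
    (hf : IsDominant C f) (hg : IsDominant C g) {k : ℕ} (hk : 1 ≤ k) : 1 ≤ gammaK C f g k :=
  one_le_of_coneGe_zpow_pow hC hanti hf.1 hg.1 hg.2.1 hk (coneGe_zpow_gammaK hC hanti hf hg hk)

theorem gammaK_self (hC : IsNormalCone C) (hanti : IsConeAntisymm C) {f : G}
    (hf : IsDominant C f) {k : ℕ} (hk : 1 ≤ k) : gammaK C f f k = k := by
  refine le_antisymm (gammaK_le hC hanti hf.1 hf hk (by simpa [ConeGe] using hC.1)) ?_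
  have h := coneGe_zpow_gammaK hC hanti hf hf hk
  rw [ConeGe, show f ^ gammaK C f f k * (f ^ k)⁻¹ = f ^ (gammaK C f f k - k) by group] at h
  have := nonneg_of_zpow_mem hC hanti hf.1 hf.2.1 h
  omega

theorem gammaK_le_gammaK_toNat_gammaK (hC : IsNormalCone C) (hanti : IsConeAntisymm C)
    {f g h : G} (hf : IsDominant C f) (hg : IsDominant C g) (hh : IsDominant C h) {k : ℕ}
    (hk : 1 ≤ k) : gammaK C f h k ≤ gammaK C f g (gammaK C g h k).toNat := by
  have hm := one_le_gammaK hC hanti hg hh hk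
  refine gammaK_le hC hanti hf.1 hh hk
    (hC.coneGe_trans_s9 (coneGe_zpow_gammaK hC hanti hf hg (by omega)) ?_)
  rw [← zpow_natCast, Int.toNat_of_nonneg (by omega)]
  exact coneGe_zpow_gammaK hC hanti hg hh hk

theorem gammaK_le_mul_gammaK_one (hC : IsNormalCone C) (hanti : IsConeAntisymm C) {f g : G}
    (hf : IsDominant C f) (hg : IsDominant C g) {m : ℕ} (hm : 1 ≤ m) :
    gammaK C f g m ≤ m * gammaK C f g 1 := by
  refine gammaK_le hC hanti hf.1 hg hm ?_
  have h := hC.coneGe_pow_s9 (coneGe_zpow_gammaK hC hanti hf hg le_rfl) m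
  rwa [← zpow_natCast (f ^ _), ← zpow_mul, pow_one, mul_comm] at h

theorem le_gammaK_mul_gammaK_one (hC : IsNormalCone C) (hanti : IsConeAntisymm C) {f g : G}
    (hf : IsDominant C f) (hg : IsDominant C g) {k : ℕ} (hk : 1 ≤ k) :
    (k : ℤ) ≤ gammaK C f g k * gammaK C g f 1 := by
  have hm := one_le_gammaK hC hanti hf hg hk
  calc (k : ℤ) = gammaK C g g k := (gammaK_self hC hanti hg hk).symm
    _ ≤ gammaK C g f (gammaK C f g k).toNat := gammaK_le_gammaK_toNat_gammaK hC hanti hg hf hg hk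
    _ ≤ (gammaK C f g k).toNat * gammaK C g f 1 :=
      gammaK_le_mul_gammaK_one hC hanti hg hf (by omega)
    _ = gammaK C f g k * gammaK C g f 1 := by rw [Int.toNat_of_nonneg (by omega)]

theorem tendsto_toNat_gammaK_atTop (hC : IsNormalCone C) (hanti : IsConeAntisymm C) {f g : G}
    (hf : IsDominant C f) (hg : IsDominant C g) :
    Tendsto (fun k => (gammaK C f g k).toNat) atTop atTop := by
  have hc1 := one_le_gammaK hC hanti hg hf le_rfl
  set c := (gammaK C g f 1).toNat
  have hc : (c : ℤ) = gammaK C g f 1 := Int.toNat_of_nonneg (by omega)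
  refine tendsto_atTop_mono' atTop ?_ (Nat.tendsto_div_const_atTop (n := c) (by omega))
  filter_upwards [eventually_ge_atTop 1] with k hk
  have hm := one_le_gammaK hC hanti hf hg hk
  have h := le_gammaK_mul_gammaK_one hC hanti hf hg hk
  rw [← hc, ← Int.toNat_of_nonneg (by omega : 0 ≤ gammaK C f g k)] at h
  exact Nat.div_le_of_le_mul (by rw [mul_comm]; exact_mod_cast h)

theorem tendsto_div_natCast_comp_mul {a : ℕ → ℝ} {u : ℕ → ℕ} {A B : ℝ}
    (ha : Tendsto (fun n => a n / n) atTop (𝓝 A)) (hu : Tendsto u atTop atTop)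
    (huB : Tendsto (fun k => (u k : ℝ) / k) atTop (𝓝 B)) :
    Tendsto (fun k => a (u k) / k) atTop (𝓝 (A * B)) := by
  refine ((ha.comp hu).mul huB).congr' ?_
  filter_upwards [hu.eventually_ne_atTop 0] with k hk
  have : (u k : ℝ) ≠ 0 := Nat.cast_ne_zero.mpr hk
  simp only [Function.comp_apply]
  field_simp

theorem hasRelGrowth_self (hC : IsNormalCone C) (hanti : IsConeAntisymm C) {f : G}
    (hf : IsDominant C f) : HasRelGrowth C f f 1 := by
  refine tendsto_const_nhds.congr' ?_
  filter_upwards [eventually_ge_atTop 1] with k hk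
  rw [gammaK_self hC hanti hf hk, Int.cast_natCast, div_self (by positivity)]

theorem HasRelGrowth.pos (hC : IsNormalCone C) (hanti : IsConeAntisymm C) {f g : G}
    (hf : IsDominant C f) (hg : IsDominant C g) {L : ℝ} (hL : HasRelGrowth C f g L) : 0 < L := by
  have hc : (1 : ℝ) ≤ gammaK C g f 1 := by exact_mod_cast one_le_gammaK hC hanti hg hf le_rfl
  refine (by positivity : 0 < 1 / (gammaK C g f 1 : ℝ)).trans_le (ge_of_tendsto hL ?_)
  filter_upwards [eventually_ge_atTop 1] with k hk
  rw [div_le_div_iff₀ (by positivity) (by positivity), one_mul]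
  exact_mod_cast le_gammaK_mul_gammaK_one hC hanti hf hg hk

theorem HasRelGrowth.le_mul (hC : IsNormalCone C) (hanti : IsConeAntisymm C) {a b c : G}
    (ha : IsDominant C a) (hb : IsDominant C b) (hc : IsDominant C c) {Lab Lbc Lac : ℝ}
    (hab : HasRelGrowth C a b Lab) (hbc : HasRelGrowth C b c Lbc)
    (hac : HasRelGrowth C a c Lac) : Lac ≤ Lab * Lbc := by
  have hm : Tendsto (fun k => ((gammaK C b c k).toNat : ℝ) / k) atTop (𝓝 Lbc) := by
    refine hbc.congr' ?_
    filter_upwards [eventually_ge_atTop 1] with k hk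
    have := one_le_gammaK hC hanti hb hc hk
    rw [← Int.toNat_of_nonneg (by omega : 0 ≤ gammaK C b c k), Int.toNat_natCast]
    rfl
  refine le_of_tendsto_of_tendsto hac
    (tendsto_div_natCast_comp_mul hab (tendsto_toNat_gammaK_atTop hC hanti hb hc) hm) ?_
  filter_upwards [eventually_ge_atTop 1] with k hk
  gcongr
  exact_mod_cast gammaK_le_gammaK_toNat_gammaK hC hanti ha hb hc hk

end RelativeGrowth

open Real in
theorem max_log_nonneg_of_one_le_mul {a b : ℝ} (ha : 0 < a) (hb : 0 < b) (hab : 1 ≤ a * b) :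
    0 ≤ max (log a) (log b) := by
  have h : 0 ≤ log a + log b := log_mul ha.ne' hb.ne' ▸ log_nonneg hab
  linarith [le_max_left (log a) (log b), le_max_right (log a) (log b)]

open Real in
theorem max_log_le_add_max_log {x y a b c d : ℝ} (hx : 0 < x) (hy : 0 < y) (ha : 0 < a)
    (hb : 0 < b) (hc : 0 < c) (hd : 0 < d) (hxac : x ≤ a * c) (hydb : y ≤ d * b) :
    max (log x) (log y) ≤ max (log a) (log b) + max (log c) (log d) := by
  have hx' : log x ≤ log a + log c := log_mul ha.ne' hc.ne' ▸ log_le_log hx hxac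
  have hy' : log y ≤ log d + log b := log_mul hd.ne' hb.ne' ▸ log_le_log hy hydb
  refine max_le ?_ ?_
  · linarith [le_max_left (log a) (log b), le_max_left (log c) (log d)]
  · linarith [le_max_right (log a) (log b), le_max_right (log c) (log d)]

/-- `κ(f,g) = max(log γ(f,g), log γ(g,f))` is a pseudo-distance on the set of
dominants: it is non-negative, vanishes on the diagonal, is symmetric, and
satisfies the triangle inequality. -/
theorem statement9 {G : Type*} [Group G] (C : Set G) (hC : IsNormalCone C)
    (hanti : ∀ f g : G, ConeGe C f g → ConeGe C g f → f = g)
    (f g h : G) (hf : IsDominant C f) (hg : IsDominant C g) (hh : IsDominant C h)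
    (Lff Lfg Lgf Lgh Lhg Lfh Lhf : ℝ)
    (hff : Tendsto (fun k : ℕ => (gammaK C f f k : ℝ) / (k : ℝ)) atTop (nhds Lff))
    (hfg : Tendsto (fun k : ℕ => (gammaK C f g k : ℝ) / (k : ℝ)) atTop (nhds Lfg))
    (hgf : Tendsto (fun k : ℕ => (gammaK C g f k : ℝ) / (k : ℝ)) atTop (nhds Lgf))
    (hgh : Tendsto (fun k : ℕ => (gammaK C g h k : ℝ) / (k : ℝ)) atTop (nhds Lgh))
    (hhg : Tendsto (fun k : ℕ => (gammaK C h g k : ℝ) / (k : ℝ)) atTop (nhds Lhg))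
    (hfh : Tendsto (fun k : ℕ => (gammaK C f h k : ℝ) / (k : ℝ)) atTop (nhds Lfh))
    (hhf : Tendsto (fun k : ℕ => (gammaK C h f k : ℝ) / (k : ℝ)) atTop (nhds Lhf)) :
    0 ≤ max (Real.log Lfg) (Real.log Lgf) ∧
    max (Real.log Lff) (Real.log Lff) = 0 ∧
    max (Real.log Lfg) (Real.log Lgf) = max (Real.log Lgf) (Real.log Lfg) ∧
    max (Real.log Lfh) (Real.log Lhf) ≤
      max (Real.log Lfg) (Real.log Lgf) + max (Real.log Lgh) (Real.log Lhg) := by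
  have pos {a b : G} {L : ℝ} (ha : IsDominant C a) (hb : IsDominant C b)
      (hL : HasRelGrowth C a b L) : 0 < L := hL.pos hC hanti ha hb
  have le_mul {a b c : G} {Lab Lbc Lac : ℝ} (ha : IsDominant C a) (hb : IsDominant C b)
      (hc : IsDominant C c) (hab : HasRelGrowth C a b Lab) (hbc : HasRelGrowth C b c Lbc)
      (hac : HasRelGrowth C a c Lac) : Lac ≤ Lab * Lbc := hab.le_mul hC hanti ha hb hc hbc hac
  have hLff : Lff = 1 := tendsto_nhds_unique hff (hasRelGrowth_self hC hanti hf)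
  refine ⟨max_log_nonneg_of_one_le_mul (pos hf hg hfg) (pos hg hf hgf)
      (le_mul hf hg hf hfg hgf (hasRelGrowth_self hC hanti hf)), by simp [hLff], max_comm _ _, ?_⟩
  exact max_log_le_add_max_log (pos hf hh hfh) (pos hh hf hhf) (pos hf hg hfg) (pos hg hf hgf)
    (pos hg hh hgh) (pos hh hg hhg) (le_mul hf hg hh hfg hgh hfh) (le_mul hh hg hf hhg hgf hhf)
end
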